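/- (The K-ideal is toric.) Let D = (V, A) be the directed graph of a finite simple graph G = (V,E), and let ℤ(D) be the cycle lattice: integer vectors z ∈ ℤ^A with z_{r(a)} = −z_a for all a and Σ_{w : v→w ∈ A} z_{v→w} = 0 for all v. In ℚ[P_a : a ∈ A], the K-ideal, i.e. the ideal generated by the cycle binomials P^{z(ω)⁺} − P^{z(ω)⁻} over all cycles ω of D, equals the lattice (toric) ideal generated by all binomials P^{z⁺} − P^{z⁻} with z ∈ ℤ(D). -/

import Mathlib

open Finset

/-- The arcs of the directed graph `D = (V, A)` associated to a simple graph `G`. -/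
abbrev Arc {V : Type*} (G : SimpleGraph V) : Type _ := {p : V × V // G.Adj p.1 p.2}

/-- The reversed arc. -/
def arcRev {V : Type*} {G : SimpleGraph V} (a : Arc G) : Arc G :=
  ⟨(a.1.2, a.1.1), a.2.symm⟩

/-- The cycle vector of a closed path `ω`: `+1` on the arcs of `ω`, `-1` on their reversals,
`0` elsewhere. -/
def cycVec {V : Type*} [DecidableEq V] (G : SimpleGraph V) {m : ℕ}
    (ω : Fin (m + 1) → V) (a : Arc G) : ℤ :=
  if ∃ i, (ω i, ω (i + 1)) = (a : V × V) then 1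
  else if ∃ i, (ω (i + 1), ω i) = (a : V × V) then -1 else 0

/-!
A cycle vector is a circulation, which gives one inclusion. Conversely, let `z ∈ ℤ(D)` be
nonzero. By flow conservation every vertex entered by an arc with `z > 0` is left by such an arc,
so following these arcs closes up into a cycle `ω` whose vector `c` is sign-compatible with `z`:
`c_a (z_a - c_a) ≥ 0` for every arc. For sign-compatible `x, y` the positive and negative parts
add, so
`P^{(x+y)⁺} − P^{(x+y)⁻} = P^{y⁺} (P^{x⁺} − P^{x⁻}) + P^{x⁻} (P^{y⁺} − P^{y⁻})`.
Applied to `z = c + (z - c)` this reduces the binomial of `z` to that of the cycle `ω` and that of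
`z - c ∈ ℤ(D)`, whose positive part is smaller; induction on `Σ_a z_a⁺` concludes.
-/

open MvPolynomial

theorem Int.toNat_add_of_mul_nonneg {x y : ℤ} (h : 0 ≤ x * y) :
    (x + y).toNat = x.toNat + y.toNat := by
  rcases le_total 0 x with hx | hx <;> rcases le_total 0 y with hy | hy
  all_goals first
    | omega
    | rcases mul_eq_zero.mp (le_antisymm (by nlinarith) h) with h0 | h0 <;> omega

theorem Fin.add_one_add_one_ne_self {m : ℕ} (hm : 2 ≤ m) (j : Fin (m + 1)) :
    j + 1 + 1 ≠ j := by
  intro h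
  have := congrArg Fin.val h
  simp only [Fin.val_add_one, Fin.ext_iff, Fin.val_last] at this
  split_ifs at this <;> omega

theorem Fintype.sum_pi_single_of_injective {ι α M : Type*} [Fintype ι] [DecidableEq α]
    [AddCommMonoid M] {f : ι → α} (hf : Function.Injective f) (x : M) (a : α) :
    ∑ i, (Pi.single (f i) x : α → M) a = if ∃ i, f i = a then x else 0 := by
  split_ifs with h
  · obtain ⟨i, rfl⟩ := h
    rw [Finset.sum_eq_single i (fun j _ hj => by simp [hf.ne hj]) (by simp)]
    exact Pi.single_eq_same _ _
  · exact Finset.sum_eq_zero fun i _ => by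
      rw [Pi.single_apply, if_neg fun hi => h ⟨i, hi.symm⟩]

/-- Some point of a self-map of a finite type is periodic; `ω` lists its orbit. -/
theorem Function.exists_injective_cyclic_orbit {α : Type*} [Finite α] [Nonempty α]
    (f : α → α) :
    ∃ (m : ℕ) (ω : Fin (m + 1) → α), Function.Injective ω ∧ ∀ k, ω (k + 1) = f (ω k) := by
  obtain ⟨i, j, hij, heq⟩ :=
    Finite.exists_ne_map_eq_of_infinite (f^[·] (Classical.arbitrary α))
  wlog hlt : i < j generalizing i j
  · exact this j i hij.symm heq.symm (by omega)
  set x := f^[i] (Classical.arbitrary α)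
  have hx : x ∈ Function.periodicPts f := by
    refine Function.mk_mem_periodicPts (n := j - i) (by omega) ?_
    simp only [Function.IsPeriodicPt, Function.IsFixedPt, x, ← Function.iterate_add_apply]
    rw [Nat.sub_add_cancel hlt.le]
    exact heq.symm
  obtain ⟨m, hm⟩ := Nat.exists_eq_add_one_of_ne_zero
    (Function.minimalPeriod_pos_of_mem_periodicPts hx).ne'
  refine ⟨m, fun k => f^[k] x, fun k l h => Fin.ext ?_, fun k => ?_⟩
  · exact Function.iterate_injOn_Iio_minimalPeriod (by rw [Set.mem_Iio, hm]; exact k.isLt)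
      (by rw [Set.mem_Iio, hm]; exact l.isLt) h
  · rw [← Function.iterate_succ_apply' f,
      ← Function.iterate_mod_minimalPeriod_eq (n := k + 1), hm]
    simp only [Fin.val_add_one]
    split_ifs with hk
    · simp [hk]
    · rw [Nat.mod_eq_of_lt (by have := Fin.val_lt_last hk; omega)]

section LatticeBinomial

variable {ι : Type*} [Fintype ι] (R : Type*) [CommRing R]

/-- `P^{z⁺} − P^{z⁻}`. -/
noncomputable def latticeBinomial (z : ι → ℤ) : MvPolynomial ι R :=
  ∏ a, X a ^ (max (z a) 0).toNat - ∏ a, X a ^ (max (-z a) 0).toNat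

@[simp]
theorem latticeBinomial_zero : latticeBinomial R (0 : ι → ℤ) = 0 := by
  simp [latticeBinomial]

variable {R}

theorem prod_X_pow_toNat_add {u v : ι → ℤ} (huv : ∀ a, 0 ≤ u a * v a) :
    ∏ a, (X a : MvPolynomial ι R) ^ (u a + v a).toNat =
      (∏ a, X a ^ (u a).toNat) * ∏ a, X a ^ (v a).toNat := by
  simp only [Int.toNat_add_of_mul_nonneg (huv _), pow_add, prod_mul_distrib]

theorem latticeBinomial_add_mem {I : Ideal (MvPolynomial ι R)} {x y : ι → ℤ}
    (hxy : ∀ a, 0 ≤ x a * y a) (hx : latticeBinomial R x ∈ I)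
    (hy : latticeBinomial R y ∈ I) :
    latticeBinomial R (x + y) ∈ I := by
  have hmax (t : ℤ) : (max t 0).toNat = t.toNat := by omega
  have key : latticeBinomial R (x + y) =
      (∏ a, X a ^ (y a).toNat) * latticeBinomial R x +
        (∏ a, X a ^ (-x a).toNat) * latticeBinomial R y := by
    simp only [latticeBinomial, Pi.add_apply, hmax, neg_add]
    rw [prod_X_pow_toNat_add hxy,
      prod_X_pow_toNat_add (u := fun a => -x a) (v := fun a => -y a) (by simpa using hxy)]
    ring
  rw [key]
  exact add_mem (I.mul_mem_left _ hx) (I.mul_mem_left _ hy)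

end LatticeBinomial

section Graph

variable {V : Type*} {G : SimpleGraph V}

@[simp]
theorem arcRev_arcRev (a : Arc G) : arcRev (arcRev a) = a := rfl

theorem arcRev_injective : Function.Injective (arcRev : Arc G → Arc G) :=
  Function.LeftInverse.injective arcRev_arcRev

variable (G) in
/-- The cycle lattice `ℤ(D)`. -/
def cycleLattice [Fintype V] [DecidableEq V] [DecidableRel G.Adj] :
    AddSubgroup (Arc G → ℤ) where
  carrier := {z | (∀ a, z (arcRev a) = -z a) ∧
    ∀ v, ∑ a ∈ univ.filter (fun a : Arc G => (a : V × V).1 = v), z a = 0}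
  add_mem' hx hy := ⟨fun a => by simp [hx.1 a, hy.1 a, add_comm],
    fun v => by simp [sum_add_distrib, hx.2 v, hy.2 v]⟩
  zero_mem' := by simp
  neg_mem' hz := ⟨fun a => by simp [hz.1 a], fun v => by simp [hz.2 v]⟩

section ClosedWalk

variable {m : ℕ} {ω : Fin (m + 1) → V}

def closedWalkArc (hadj : ∀ j, G.Adj (ω j) (ω (j + 1))) (i : Fin (m + 1)) : Arc G :=
  ⟨(ω i, ω (i + 1)), hadj i⟩

def closedWalkVec [DecidableEq V] (hadj : ∀ j, G.Adj (ω j) (ω (j + 1))) : Arc G → ℤ :=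
  ∑ i, (Pi.single (closedWalkArc hadj i) 1 - Pi.single (arcRev (closedWalkArc hadj i)) 1)

theorem closedWalkVec_mem_cycleLattice [Fintype V] [DecidableEq V] [DecidableRel G.Adj]
    (hadj : ∀ j, G.Adj (ω j) (ω (j + 1))) : closedWalkVec hadj ∈ cycleLattice G := by
  refine ⟨fun a => ?_, fun v => ?_⟩
  · simp [closedWalkVec, Pi.single_apply, ← arcRev_injective.eq_iff (a := arcRev a)]
  · simp only [closedWalkVec, Finset.sum_apply, Pi.sub_apply, sum_sub_distrib]
    rw [sum_comm, sum_comm (s := univ.filter _)]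
    simp only [sum_pi_single', mem_filter, mem_univ, true_and]
    exact sub_eq_zero.mpr (Equiv.sum_comp (Equiv.addRight (1 : Fin (m + 1)))
      fun i => if ω i = v then (1 : ℤ) else 0).symm

theorem cycVec_eq_closedWalkVec [DecidableEq V] (hadj : ∀ j, G.Adj (ω j) (ω (j + 1)))
    (hinj : Function.Injective ω) (hm : 2 ≤ m) : cycVec G ω = closedWalkVec hadj := by
  have hfwd : Function.Injective (closedWalkArc hadj) := fun i j h =>
    hinj (congrArg (fun a : Arc G => (a : V × V).1) h)
  have hbwd : Function.Injective fun i => arcRev (closedWalkArc hadj i) := fun i j h =>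
    hinj (congrArg (fun a : Arc G => (a : V × V).2) h)
  ext a
  simp only [closedWalkVec, Finset.sum_apply, Pi.sub_apply, sum_sub_distrib]
  rw [Fintype.sum_pi_single_of_injective hfwd, Fintype.sum_pi_single_of_injective hbwd]
  simp only [cycVec, closedWalkArc, arcRev, Subtype.ext_iff]
  split_ifs with h1 h2 <;> try rfl
  obtain ⟨⟨i, hi⟩, ⟨j, hj⟩⟩ := And.intro h1 h2
  rw [← hj, Prod.mk.injEq] at hi
  obtain rfl : i = j + 1 := hinj hi.1
  exact (Fin.add_one_add_one_ne_self hm j (hinj hi.2)).elim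

theorem cycVec_mem_cycleLattice [Fintype V] [DecidableEq V] [DecidableRel G.Adj]
    (hadj : ∀ j, G.Adj (ω j) (ω (j + 1))) (hinj : Function.Injective ω) (hm : 2 ≤ m) :
    cycVec G ω ∈ cycleLattice G :=
  cycVec_eq_closedWalkVec hadj hinj hm ▸ closedWalkVec_mem_cycleLattice hadj

theorem two_le_of_closedWalk_pos {z : Arc G → ℤ} (hrev : ∀ a, z (arcRev a) = -z a)
    (hadj : ∀ j, G.Adj (ω j) (ω (j + 1))) (hpos : ∀ i, 0 < z (closedWalkArc hadj i)) :
    2 ≤ m := by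
  -- `m = 0` is a loop; `m = 1` runs along an arc and back along its reverse, of opposite sign.
  rcases m with _ | _ | m
  · exact absurd (hadj 0) (by simp)
  · have h1 := hpos 1
    rw [show closedWalkArc hadj 1 = arcRev (closedWalkArc hadj 0) from rfl, hrev] at h1
    have h0 := hpos 0
    omega
  · omega

theorem cycVec_mul_sub_nonneg [DecidableEq V] {z : Arc G → ℤ}
    (hrev : ∀ a, z (arcRev a) = -z a)
    (hadj : ∀ j, G.Adj (ω j) (ω (j + 1))) (hpos : ∀ i, 0 < z (closedWalkArc hadj i))
    (a : Arc G) : 0 ≤ cycVec G ω a * (z a - cycVec G ω a) := by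
  unfold cycVec
  split_ifs with hfwd hbwd
  · obtain ⟨i, hi⟩ := hfwd
    have := hpos i
    rw [show closedWalkArc hadj i = a from Subtype.ext hi] at this
    omega
  · obtain ⟨i, hi⟩ := hbwd
    have := hpos i
    rw [show a = arcRev (closedWalkArc hadj i) from Subtype.ext hi.symm, hrev]
    omega
  · simp

end ClosedWalk

variable [Fintype V] [DecidableEq V] [DecidableRel G.Adj] {z : Arc G → ℤ}

theorem exists_pos_arc_from_head (hz : z ∈ cycleLattice G) {a : Arc G} (ha : 0 < z a) :
    ∃ (w : V) (h : G.Adj (a : V × V).2 w), 0 < z ⟨((a : V × V).2, w), h⟩ := by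
  obtain ⟨⟨⟨u, w⟩, hb⟩, hbu, hpos⟩ := exists_pos_of_sum_zero_of_exists_nonzero z
    (hz.2 (a : V × V).2) ⟨arcRev a, by simp [arcRev], by rw [hz.1 a]; omega⟩
  obtain rfl : u = (a : V × V).2 := (mem_filter.mp hbu).2
  exact ⟨w, hb, hpos⟩

theorem exists_injective_closedWalk_pos (hz : z ∈ cycleLattice G) {a₀ : Arc G}
    (ha₀ : 0 < z a₀) :
    ∃ (m : ℕ) (ω : Fin (m + 1) → V) (hadj : ∀ j, G.Adj (ω j) (ω (j + 1))),
      Function.Injective ω ∧ ∀ i, 0 < z (closedWalkArc hadj i) := by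
  let S := {v : V // ∃ a : Arc G, (a : V × V).2 = v ∧ 0 < z a}
  have hnext (v : S) : ∃ (w : S) (h : G.Adj v w), 0 < z ⟨(v, w), h⟩ := by
    rcases v with ⟨_, a, rfl, ha⟩
    obtain ⟨w, hw, hpos⟩ := exists_pos_arc_from_head hz ha
    exact ⟨⟨w, _, rfl, hpos⟩, hw, hpos⟩
  choose next hadj hpos using hnext
  have : Nonempty S := ⟨⟨_, a₀, rfl, ha₀⟩⟩
  obtain ⟨m, ω, hinj, hω⟩ := Function.exists_injective_cyclic_orbit next
  have hadj' (j : Fin (m + 1)) : G.Adj (ω j) (ω (j + 1)) := hω j ▸ hadj (ω j)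
  refine ⟨m, fun j => ω j, hadj', Subtype.val_injective.comp hinj, fun i => ?_⟩
  convert hpos (ω i) using 2
  exact Subtype.ext (by simp [closedWalkArc, hω])

variable (R : Type*) [CommRing R] (G) in
/-- The K-ideal. -/
noncomputable def cycleIdeal : Ideal (MvPolynomial (Arc G) R) :=
  Ideal.span {f | ∃ (m : ℕ) (ω : Fin (m + 1) → V),
    (∀ j, G.Adj (ω j) (ω (j + 1))) ∧ Function.Injective ω ∧ 2 ≤ m ∧
      f = latticeBinomial R (cycVec G ω)}

theorem latticeBinomial_mem_cycleIdeal {R : Type*} [CommRing R] (hz : z ∈ cycleLattice G) :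
    latticeBinomial R z ∈ cycleIdeal G R := by
  induction hn : ∑ a, (z a).toNat using Nat.strong_induction_on generalizing z with
  | _ n ih =>
  by_cases hpos : ∃ a, 0 < z a
  · obtain ⟨a₀, ha₀⟩ := hpos
    obtain ⟨m, ω, hadj, hinj, hwalk⟩ := exists_injective_closedWalk_pos hz ha₀
    have hm := two_le_of_closedWalk_pos hz.1 hadj hwalk
    have hconf := cycVec_mul_sub_nonneg hz.1 hadj hwalk
    have hsplit (a : Arc G) :
        (z a).toNat = (cycVec G ω a).toNat + (z a - cycVec G ω a).toNat := by
      rw [← Int.toNat_add_of_mul_nonneg (hconf a), add_sub_cancel]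
    have hc₀ : cycVec G ω (closedWalkArc hadj 0) = 1 := if_pos ⟨0, rfl⟩
    have hlt : ∑ a, (z a - cycVec G ω a).toNat < n := by
      rw [← hn]
      refine sum_lt_sum (fun a _ => (hsplit a).symm ▸ Nat.le_add_left _ _)
        ⟨closedWalkArc hadj 0, mem_univ _, ?_⟩
      rw [hsplit, hc₀]
      omega
    rw [← add_sub_cancel (cycVec G ω) z]
    exact latticeBinomial_add_mem hconf (Ideal.subset_span ⟨m, ω, hadj, hinj, hm, rfl⟩)
      (ih _ hlt (sub_mem hz (cycVec_mem_cycleLattice hadj hinj hm)) rfl)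
  · simp only [not_exists, not_lt] at hpos
    obtain rfl : z = 0 := funext fun a => by
      have := hz.1 a
      have := hpos (arcRev a)
      have := hpos a
      simp only [Pi.zero_apply]
      omega
    simp

end Graph

/-- the K-ideal is toric: in `ℚ[P_a : a ∈ A]`, the ideal generated by the cycle
binomials `P^{z(ω)⁺} − P^{z(ω)⁻}` equals the lattice ideal generated by all the binomials
`P^{z⁺} − P^{z⁻}`, `z ∈ ℤ(D)`. -/
theorem stmt_13 {V : Type*} [Fintype V] [DecidableEq V]
    (G : SimpleGraph V) [DecidableRel G.Adj] :
    Ideal.span {f : MvPolynomial (Arc G) ℚ |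
      ∃ (m : ℕ) (ω : Fin (m + 1) → V),
        (∀ j, G.Adj (ω j) (ω (j + 1))) ∧ Function.Injective ω ∧ 2 ≤ m ∧
        f = (∏ a : Arc G, MvPolynomial.X a ^ (max (cycVec G ω a) 0).toNat)
          - ∏ a : Arc G, MvPolynomial.X a ^ (max (- cycVec G ω a) 0).toNat} =
    Ideal.span {f : MvPolynomial (Arc G) ℚ |
      ∃ z : Arc G → ℤ,
        (∀ a, z (arcRev a) = - z a) ∧
        (∀ v : V, (∑ a ∈ univ.filter (fun a : Arc G => (a : V × V).1 = v), z a) = 0) ∧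
        f = (∏ a : Arc G, MvPolynomial.X a ^ (max (z a) 0).toNat)
          - ∏ a : Arc G, MvPolynomial.X a ^ (max (- z a) 0).toNat} := by
  apply le_antisymm
  · rw [Ideal.span_le]
    rintro f ⟨m, ω, hadj, hinj, hm, rfl⟩
    obtain ⟨hrev, hflow⟩ := cycVec_mem_cycleLattice hadj hinj hm
    exact Ideal.subset_span ⟨cycVec G ω, hrev, hflow, rfl⟩
  · rw [Ideal.span_le]
    rintro f ⟨z, hrev, hflow, rfl⟩
    exact latticeBinomial_mem_cycleIdeal (R := ℚ) ⟨hrev, hflow⟩
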